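/- Let S = ⟨qm₁,…,qm_d, pn₁,…,pn_k⟩ be a specific gluing of S₁ and S₂. Then every u∈S can be written as u = qz₁ + pz₂ with z₁∈S₁ and z₂∈AP(S₂,q); moreover this representation is unique (if u = qs₁ + ps₂ with s₁∈S₁ and s₂∈AP(S₂,q), then s₁ = z₁ and s₂ = z₂) and it satisfies ord_S(u) = ord_{S₁}(z₁) + ord_{S₂}(z₂). -/

import Mathlib

open scoped Pointwise

/-- `S ⊆ ℕ` is a numerical semigroup: it contains `0`, is closed under
addition, and has finite complement in `ℕ`. -/
def IsNumSgp (S : Set ℕ) : Prop :=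
  (0 : ℕ) ∈ S ∧ (∀ a ∈ S, ∀ b ∈ S, a + b ∈ S) ∧ {x : ℕ | x ∉ S}.Finite

/-- `nM S t` is the `t`-fold sumset of the maximal ideal `M = S \ {0}`,
with the convention `nM S 0 = S`. -/
def nM (S : Set ℕ) : ℕ → Set ℕ
  | 0 => S
  | t + 1 => (S \ {0}) + nM S t

/-- the order of `s` with respect to `S` : the largest `t` with `s ∈ tM`. -/
noncomputable def ordS (S : Set ℕ) (s : ℕ) : ℕ := sSup {t : ℕ | s ∈ nM S t}

/-- the multiplicity of `S` : its least nonzero element. -/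
noncomputable def mult (S : Set ℕ) : ℕ := sInf {x : ℕ | x ∈ S ∧ x ≠ 0}

/-- the Apéry set of `S` with respect to `x` : elements `s ∈ S` with `s - x ∉ S`. -/
def Ap (S : Set ℕ) (x : ℕ) : Set ℕ := {s : ℕ | s ∈ S ∧ ¬ ∃ t ∈ S, s = t + x}

/-- membership of an integer in (the image in `ℤ` of) `S`. -/
def zmem (S : Set ℕ) (z : ℤ) : Prop := ∃ t ∈ S, (t : ℤ) = z

/-- the Frobenius number of `S` : the largest integer not in `S`. -/
noncomputable def Frob (S : Set ℕ) : ℤ := sSup {z : ℤ | ¬ zmem S z}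

/-- `S` is symmetric: for every integer `z`, `z ∈ S` iff `F(S) - z ∉ S`. -/
def IsSymmetric (S : Set ℕ) : Prop := ∀ z : ℤ, zmem S z ↔ ¬ zmem S (Frob S - z)

/-- the set of maximal elements of `Ap S x` with respect to the order
`u ⪯ v` iff `v = u + z` for some `z ∈ S`. -/
def MaxAp (S : Set ℕ) (x : ℕ) : Set ℕ :=
  {w : ℕ | w ∈ Ap S x ∧ ∀ y ∈ Ap S x, (∃ z ∈ S, y = w + z) → y = w}

/-- the set of maximal elements of `Ap S x` with respect to the order
`u ⪯_M v` iff `v = u + z` for some `z ∈ S` with `ord(v) = ord(u) + ord(z)`. -/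
def MaxMAp (S : Set ℕ) (x : ℕ) : Set ℕ :=
  {w : ℕ | w ∈ Ap S x ∧ ∀ y ∈ Ap S x,
    (∃ z ∈ S, y = w + z ∧ ordS S y = ordS S w + ordS S z) → y = w}

/-- `S` is M-pure with respect to `x` : all maximal elements of `Ap S x`
under `⪯_M` have the same order. -/
def MPureWrt (S : Set ℕ) (x : ℕ) : Prop :=
  ∀ w ∈ MaxMAp S x, ∀ w' ∈ MaxMAp S x, ordS S w = ordS S w'

/-- `S` is M-pure : it is M-pure with respect to its multiplicity. -/
def MPure (S : Set ℕ) : Prop := MPureWrt S (mult S)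

/-- `β_i(x)` : the number of elements of `Ap S x` of order `i`. -/
noncomputable def betaS (S : Set ℕ) (x i : ℕ) : ℕ := {w ∈ Ap S x | ordS S w = i}.ncard

/-- `d(x)` : the maximal order of an element of `Ap S x`. -/
noncomputable def dS (S : Set ℕ) (x : ℕ) : ℕ := sSup (ordS S '' Ap S x)

/-- the reduction number of `S` : the least `r` with `(r+1)M = m(S) + rM`. -/
noncomputable def redNum (S : Set ℕ) : ℕ :=
  sInf {r : ℕ | nM S (r + 1) = (fun y => mult S + y) '' nM S r}

/-- `l_x(S) = max { ord(s+x) - ord(x) - ord(s) : s ∈ S, ord(s) ≤ r }`. -/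
noncomputable def lS (S : Set ℕ) (x : ℕ) : ℕ :=
  sSup {t : ℕ | ∃ s ∈ S, ordS S s ≤ redNum S ∧ t = ordS S (s + x) - ordS S x - ordS S s}

/-- the Hilbert function of `S`. -/
noncomputable def HilbS (S : Set ℕ) (t : ℕ) : ℕ := (nM S t \ nM S (t + 1)).ncard

/-- The data of a gluing `S = ⟨q m₁, …, q m_d, p n₁, …, p n_k⟩` of two numerical
semigroups `S₁ = ⟨m₁, …, m_d⟩` and `S₂ = ⟨n₁, …, n_k⟩`, minimally generated by
`m₁ < ⋯ < m_d` and `n₁ < ⋯ < n_k`, where `p ∈ S₁ \ {m₁, …, m_d}`,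
`q ∈ S₂ \ {n₁, …, n_k}` and `gcd(p, q) = 1`. -/
structure Gluing where
  d : ℕ
  k : ℕ
  hd : 0 < d
  hk : 0 < k
  m : Fin d → ℕ
  n : Fin k → ℕ
  p : ℕ
  q : ℕ
  hm : StrictMono m
  hn : StrictMono n
  hmin₁ : ∀ i, m i ∉ AddSubmonoid.closure (Set.range m \ {m i})
  hmin₂ : ∀ j, n j ∉ AddSubmonoid.closure (Set.range n \ {n j})
  hnum₁ : IsNumSgp (AddSubmonoid.closure (Set.range m) : Set ℕ)
  hnum₂ : IsNumSgp (AddSubmonoid.closure (Set.range n) : Set ℕ)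
  hp : p ∈ AddSubmonoid.closure (Set.range m)
  hq : q ∈ AddSubmonoid.closure (Set.range n)
  hpm : p ∉ Set.range m
  hqn : q ∉ Set.range n
  hpq : Nat.gcd p q = 1

/-- the numerical semigroup `S₁ = ⟨m₁, …, m_d⟩`. -/
def Gluing.S₁ (G : Gluing) : Set ℕ := (AddSubmonoid.closure (Set.range G.m) : Set ℕ)

/-- the numerical semigroup `S₂ = ⟨n₁, …, n_k⟩`. -/
def Gluing.S₂ (G : Gluing) : Set ℕ := (AddSubmonoid.closure (Set.range G.n) : Set ℕ)

/-- the glued numerical semigroup `S = ⟨q m₁, …, q m_d, p n₁, …, p n_k⟩`. -/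
def Gluing.S (G : Gluing) : Set ℕ :=
  (AddSubmonoid.closure
    ((fun x => G.q * x) '' Set.range G.m ∪ (fun x => G.p * x) '' Set.range G.n) : Set ℕ)

/-- the smallest generator `m₁` of `S₁`. -/
def Gluing.m₁ (G : Gluing) : ℕ := G.m ⟨0, G.hd⟩

/-- the smallest generator `n₁` of `S₂`. -/
def Gluing.n₁ (G : Gluing) : ℕ := G.n ⟨0, G.hk⟩

/-- the gluing is specific if `ord_{S₂}(q) + l_q(S₂) ≤ ord_{S₁}(p)`. -/
def Gluing.Specific (G : Gluing) : Prop := ordS G.S₂ G.q + lS G.S₂ G.q ≤ ordS G.S₁ G.p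

/-- the gluing is nice if `q = a n₁` for some `1 < a ≤ ord_{S₁}(p)`. -/
def Gluing.Nice (G : Gluing) : Prop := ∃ a : ℕ, 1 < a ∧ a ≤ ordS G.S₁ G.p ∧ G.q = a * G.n₁


/-!
Write `u = q a + p b` with `a ∈ S₁`, `b ∈ S₂`, and `b = w + c q` with `w ∈ AP(S₂, q)`; then
`u = q (a + c p) + p w`. The representation is unique because `gcd(p, q) = 1` forces the
`S₂`-parts to agree mod `q`, and Apéry elements are determined by their residue.

Orders add along `(z₁, z₂) ↦ q z₁ + p z₂`, giving `ord_S u ≥ ord z₁ + ord z₂`. Conversely a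
longest factorisation of `u` groups as `q a + p b` with `ord a + ord b ≥ ord_S u`, and trading
`c q` in `b` for `c p` in `a` loses at most `c (ord q + l_q)` in `S₂` while gaining at least
`c ord p` in `S₁`. The bound `ord(s + q) ≤ ord s + ord q + l_q` holds for every `s` (not only
`ord s ≤ r`) because above the reduction number each element is `e` plus an element of order
one less; the reduction number exists by the Erdős–Ginzburg–Ziv theorem.
-/

section Order

variable {S : AddSubmonoid ℕ}

theorem nM_subset : ∀ t, nM S t ⊆ S
  | 0 => subset_rfl
  | t + 1 => by
    rintro _ ⟨a, ha, b, hb, rfl⟩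
    exact add_mem ha.1 (nM_subset t hb)

theorem add_mem_nM {a b t : ℕ} (ha : a ∈ S) (hb : b ∈ nM S t) : a + b ∈ nM S t := by
  induction t generalizing b with
  | zero => exact add_mem ha hb
  | succ t ih =>
    obtain ⟨m, hm, c, hc, rfl⟩ := Set.mem_add.mp hb
    rw [add_left_comm]
    exact Set.add_mem_add hm (ih hc)

theorem add_mem_nM_add {a b t u : ℕ} (ha : a ∈ nM S t) (hb : b ∈ nM S u) :
    a + b ∈ nM S (t + u) := by
  induction t generalizing a with
  | zero => simpa using add_mem_nM ha hb
  | succ t ih =>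
    obtain ⟨m, hm, c, hc, rfl⟩ := Set.mem_add.mp ha
    rw [add_assoc m c b, show t + 1 + u = t + u + 1 by omega]
    exact Set.add_mem_add hm (ih hc)

theorem nM_antitone : Antitone (nM S) :=
  antitone_nat_of_succ_le fun _ => by
    rintro _ ⟨m, hm, c, hc, rfl⟩
    exact add_mem_nM hm.1 hc

theorem mem_nM_one {a : ℕ} (ha : a ∈ S) (h0 : a ≠ 0) : a ∈ nM S 1 :=
  ⟨a, ⟨ha, h0⟩, 0, zero_mem S, add_zero a⟩

theorem mul_mem_nM {x t : ℕ} (hx : x ∈ nM S t) (c : ℕ) : c * x ∈ nM S (c * t) := by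
  induction c with
  | zero =>
    rw [zero_mul, zero_mul]
    exact zero_mem S
  | succ c ih =>
    rw [add_one_mul, add_one_mul]
    exact add_mem_nM_add ih hx

theorem le_of_mem_nM {s t : ℕ} (hs : s ∈ nM S t) : t ≤ s := by
  induction t generalizing s with
  | zero => exact Nat.zero_le s
  | succ t ih =>
    obtain ⟨m, hm, c, hc, rfl⟩ := Set.mem_add.mp hs
    have := Nat.one_le_iff_ne_zero.mpr hm.2
    have := ih hc
    omega

theorem mem_nM_ordS {s : ℕ} (hs : s ∈ S) : s ∈ nM S (ordS S s) :=
  Nat.sSup_mem (s := {t | s ∈ nM S t}) ⟨0, hs⟩ ⟨s, fun _ => le_of_mem_nM⟩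

theorem le_ordS {s t : ℕ} (hs : s ∈ nM S t) : t ≤ ordS S s :=
  le_csSup ⟨s, fun _ => le_of_mem_nM⟩ hs

theorem ordS_add_ordS_le {a b : ℕ} (ha : a ∈ S) (hb : b ∈ S) :
    ordS S a + ordS S b ≤ ordS S (a + b) :=
  le_ordS (add_mem_nM_add (mem_nM_ordS ha) (mem_nM_ordS hb))

theorem mul_ordS_le {x : ℕ} (hx : x ∈ S) (c : ℕ) : c * ordS S x ≤ ordS S (c * x) :=
  le_ordS (mul_mem_nM (mem_nM_ordS hx) c)

theorem mul_mem_nM_of_mul_mem {T : AddSubmonoid ℕ} {c : ℕ} (hc : c ≠ 0) (hST : ∀ x ∈ S, c * x ∈ T)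
    {x t : ℕ} (hx : x ∈ nM S t) : c * x ∈ nM T t := by
  induction t generalizing x with
  | zero => exact hST x hx
  | succ t ih =>
    obtain ⟨m, hm, y, hy, rfl⟩ := Set.mem_add.mp hx
    rw [mul_add]
    exact Set.add_mem_add ⟨hST m hm.1, mul_ne_zero hc hm.2⟩ (ih hy)

end Order

section Multiplicity

variable {S : AddSubmonoid ℕ}

theorem mult_le {a : ℕ} (ha : a ∈ S) (h0 : a ≠ 0) : mult S ≤ a :=
  Nat.sInf_le ⟨ha, h0⟩

variable (hS : (S : Set ℕ)ᶜ.Finite)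
include hS

theorem mult_mem_and_ne_zero : mult S ∈ S ∧ mult S ≠ 0 := by
  obtain ⟨B, hB⟩ := hS.bddAbove
  have hB1 : B + 1 ∈ S := by
    by_contra h
    exact absurd (hB h) (by omega)
  exact Nat.sInf_mem (s := {x | x ∈ S ∧ x ≠ 0}) ⟨B + 1, hB1, by omega⟩

theorem mult_mem_nM_one : mult S ∈ nM S 1 :=
  ⟨mult S, mult_mem_and_ne_zero hS, 0, zero_mem S, add_zero _⟩

theorem bddAbove_setOf_ordS_le (R : ℕ) : BddAbove {s ∈ (S : Set ℕ) | ordS S s ≤ R} := by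
  obtain ⟨B, hB⟩ := hS.bddAbove
  refine ⟨B + (R + 1) * mult S, fun s ⟨_, hsR⟩ => ?_⟩
  by_contra! hs
  have hrest : s - (R + 1) * mult S ∈ S := by
    by_contra h
    exact absurd (hB h) (by omega)
  have : s ∈ nM S (R + 1) := by
    have := add_mem_nM hrest (by simpa using mul_mem_nM (mult_mem_nM_one hS) (R + 1))
    rwa [Nat.sub_add_cancel (by omega)] at this
  have := le_ordS this
  omega

end Multiplicity

section Reduction

variable {S : AddSubmonoid ℕ}

theorem exists_fin_sum_of_mem_nM {s t : ℕ} (hs : s ∈ nM S t) :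
    ∃ a : Fin t → ℕ, (∀ i, a i ∈ S ∧ a i ≠ 0) ∧ ∃ b ∈ S, s = ∑ i, a i + b := by
  induction t generalizing s with
  | zero => exact ⟨Fin.elim0, fun i => i.elim0, s, hs, by simp⟩
  | succ t ih =>
    obtain ⟨m, hm, c, hc, rfl⟩ := Set.mem_add.mp hs
    obtain ⟨a, ha, b, hb, rfl⟩ := ih hc
    refine ⟨Fin.cons m a, Fin.cases hm ha, b, hb, ?_⟩
    rw [Fin.sum_cons, add_assoc]

theorem sum_add_mem_nM {ι : Type*} (T : Finset ι) {a : ι → ℕ} (ha : ∀ i ∈ T, a i ∈ S ∧ a i ≠ 0)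
    {b : ℕ} (hb : b ∈ S) : ∑ i ∈ T, a i + b ∈ nM S T.card := by
  induction T using Finset.cons_induction with
  | empty =>
    rw [Finset.sum_empty, zero_add, Finset.card_empty]
    exact hb
  | cons i T hi ih =>
    rw [Finset.sum_cons, Finset.card_cons, add_assoc]
    exact Set.add_mem_add (ha i (Finset.mem_cons_self i T))
      (ih fun j hj => ha j (Finset.mem_cons_of_mem hj))

variable (hS : (S : Set ℕ)ᶜ.Finite)
include hS

/-- Among `2e - 1` summands of an element of `(t+1)M` (with `e` the multiplicity), the
Erdős–Ginzburg–Ziv theorem finds `e` whose sum is `k e` for some `k ≥ e`; replacing them by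
`k` copies of `e` exhibits the element as `e` plus an element of `tM`. -/
theorem exists_mult_add_of_mem_nM {s t : ℕ} (hs : s ∈ nM S (t + 1))
    (ht : 2 * mult S - 1 ≤ t + 1) : ∃ y ∈ nM S t, s = mult S + y := by
  classical
  obtain ⟨he, he0⟩ := mult_mem_and_ne_zero hS
  obtain ⟨a, ha, b, hb, rfl⟩ := exists_fin_sum_of_mem_nM hs
  obtain ⟨T, -, hTcard, hTdvd⟩ :=
    Int.erdos_ginzburg_ziv (s := Finset.univ) (n := mult S) (fun i => (a i : ℤ)) (by simpa using ht)
  obtain ⟨k, hk⟩ : mult S ∣ ∑ i ∈ T, a i := by exact_mod_cast hTdvd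
  have hek : mult S ≤ k := by
    have := T.card_nsmul_le_sum a (mult S) fun i _ => mult_le (ha i).1 (ha i).2
    rw [hTcard, smul_eq_mul, hk] at this
    exact Nat.le_of_mul_le_mul_left this (Nat.pos_of_ne_zero he0)
  have hcompl : Tᶜ.card = t + 1 - mult S := by
    rw [Finset.card_compl, Fintype.card_fin, hTcard]
  refine ⟨(k - 1) * mult S + (∑ i ∈ Tᶜ, a i + b), nM_antitone ?_
    (add_mem_nM_add (mul_mem_nM (mult_mem_nM_one hS) (k - 1))
      (sum_add_mem_nM Tᶜ (fun i _ => ha i) hb)), ?_⟩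
  · rw [hcompl]
    omega
  · rw [← Finset.sum_add_sum_compl T, hk]
    rcases k with _ | k
    · omega
    rw [Nat.add_sub_cancel]
    ring

theorem nM_redNum_succ : nM S (redNum S + 1) = (mult S + ·) '' nM S (redNum S) := by
  refine Nat.sInf_mem (s := {r | nM S (r + 1) = (mult S + ·) '' nM S r})
    ⟨2 * mult S, Set.Subset.antisymm (fun s hs => ?_) ?_⟩
  · obtain ⟨y, hy, rfl⟩ := exists_mult_add_of_mem_nM hS hs (by omega)
    exact ⟨y, hy, rfl⟩
  · rintro _ ⟨y, hy, rfl⟩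
    exact Set.add_mem_add (mult_mem_and_ne_zero hS) hy

theorem exists_mult_add_of_redNum_le {s n : ℕ} (hn : redNum S ≤ n) (hs : s ∈ nM S (n + 1)) :
    ∃ y ∈ nM S n, s = mult S + y := by
  induction n, hn using Nat.le_induction generalizing s with
  | base =>
    obtain ⟨y, hy, rfl⟩ := nM_redNum_succ hS ▸ hs
    exact ⟨y, hy, rfl⟩
  | succ n _ ih =>
    obtain ⟨m, hm, c, hc, rfl⟩ := Set.mem_add.mp hs
    obtain ⟨y, hy, rfl⟩ := ih hc
    exact ⟨m + y, Set.add_mem_add hm hy, by ring⟩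

end Reduction

section Excess

variable {S : AddSubmonoid ℕ} (hS : (S : Set ℕ)ᶜ.Finite)
include hS

theorem exists_mult_add_of_redNum_lt_ordS {s : ℕ} (hs : s ∈ S) (h : redNum S < ordS S s) :
    ∃ y ∈ S, s = mult S + y := by
  obtain ⟨n, hn⟩ := Nat.exists_eq_add_of_lt h
  have hs' : s ∈ nM S (redNum S + n + 1) := hn ▸ mem_nM_ordS hs
  obtain ⟨y, hy, rfl⟩ := exists_mult_add_of_redNum_le hS (Nat.le_add_right _ n) hs'
  exact ⟨y, nM_subset _ hy, rfl⟩

theorem ordS_mult_add {y : ℕ} (hy : y ∈ S) (h : redNum S < ordS S (mult S + y)) :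
    ordS S (mult S + y) = ordS S y + 1 := by
  have hey : mult S + y ∈ nM S (ordS S y + 1) :=
    Set.add_mem_add (mult_mem_and_ne_zero hS) (mem_nM_ordS hy)
  obtain ⟨n, hn⟩ := Nat.exists_eq_add_of_lt h
  have hmem : mult S + y ∈ nM S (redNum S + n + 1) :=
    hn ▸ mem_nM_ordS (add_mem (mult_mem_and_ne_zero hS).1 hy)
  obtain ⟨y', hy', hyy'⟩ := exists_mult_add_of_redNum_le hS (Nat.le_add_right _ n) hmem
  have := le_ordS ((Nat.add_left_cancel hyy') ▸ hy')
  have := le_ordS hey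
  omega

theorem sub_ordS_sub_ordS_le_lS {x s : ℕ} (hx : x ∈ S) (hs : s ∈ S) (hr : ordS S s ≤ redNum S) :
    ordS S (s + x) - ordS S x - ordS S s ≤ lS S x := by
  refine le_csSup ?_ ⟨s, hs, hr, rfl⟩
  obtain ⟨B, hB⟩ := bddAbove_setOf_ordS_le hS (redNum S)
  refine ⟨B + x, ?_⟩
  rintro _ ⟨s, hs, hr, rfl⟩
  have h₁ := le_of_mem_nM (mem_nM_ordS (add_mem hs hx))
  have h₂ := hB ⟨hs, hr⟩
  omega

theorem ordS_add_le {x s : ℕ} (hx : x ∈ S) (hs : s ∈ S) :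
    ordS S (s + x) ≤ ordS S s + ordS S x + lS S x := by
  induction s using Nat.strong_induction_on with
  | _ s ih =>
  rcases le_or_gt (ordS S s) (redNum S) with hr | hr
  · have := sub_ordS_sub_ordS_le_lS hS hx hs hr
    omega
  obtain ⟨y, hy, rfl⟩ := exists_mult_add_of_redNum_lt_ordS hS hs hr
  rw [add_assoc]
  rcases le_or_gt (ordS S (mult S + (y + x))) (redNum S) with hr' | hr'
  · omega
  have hy1 := ordS_mult_add hS hy hr
  have hyx1 := ordS_mult_add hS (add_mem hy hx) hr'
  have := ih y (by have := (mult_mem_and_ne_zero hS).2; omega) hy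
  omega

theorem ordS_add_mul_le {x z : ℕ} (hx : x ∈ S) (hz : z ∈ S) (c : ℕ) :
    ordS S (z + c * x) ≤ ordS S z + c * (ordS S x + lS S x) := by
  induction c with
  | zero => simp
  | succ c ih =>
    have := ordS_add_le hS hx (add_mem hz (by simpa using nsmul_mem hx c))
    rw [add_one_mul, ← add_assoc, add_one_mul]
    omega

end Excess

section Apery

variable {S : AddSubmonoid ℕ} {q : ℕ}

theorem exists_mem_ap_add_mul (hq : q ≠ 0) {b : ℕ} (hb : b ∈ S) :
    ∃ w ∈ Ap S q, ∃ c, b = w + c * q := by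
  induction b using Nat.strong_induction_on with
  | _ b ih =>
  by_cases hAp : ∃ t ∈ S, b = t + q
  · obtain ⟨t, ht, rfl⟩ := hAp
    obtain ⟨w, hw, c, rfl⟩ := ih t (by omega) ht
    exact ⟨w, hw, c + 1, by ring⟩
  · exact ⟨b, ⟨hb, hAp⟩, 0, by simp⟩

theorem eq_of_mem_ap_of_modEq (hq : q ∈ S) {w z : ℕ} (hw : w ∈ Ap S q) (hz : z ∈ Ap S q)
    (h : w ≡ z [MOD q]) : w = z := by
  wlog hwz : w ≤ z generalizing w z
  · exact (this hz hw h.symm (by omega)).symm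
  obtain ⟨c, hc⟩ := (Nat.modEq_iff_dvd' hwz).mp h
  rcases c with _ | c
  · omega
  refine absurd ⟨w + c * q, add_mem hw.1 (by simpa using nsmul_mem hq c), ?_⟩ hz.2
  rw [mul_add_one] at hc
  rw [mul_comm c q]
  omega

end Apery

theorem one_mem_of_one_mem_closure {s : Set ℕ} (h : 1 ∈ AddSubmonoid.closure s) : 1 ∈ s := by
  suffices ∀ x ∈ AddSubmonoid.closure s, x = 1 → 1 ∈ s from this 1 h rfl
  intro x hx
  induction hx using AddSubmonoid.closure_induction with
  | mem y hy => rintro rfl; exact hy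
  | zero => intro h; omega
  | add a b _ _ iha ihb =>
    intro h
    rcases Nat.add_eq_one_iff.mp h with ⟨-, hb⟩ | ⟨ha, -⟩
    exacts [ihb hb, iha ha]

namespace Gluing

variable (G : Gluing)

theorem q_ne_zero : G.q ≠ 0 := by
  intro hq
  have hp : G.p = 1 := by simpa [hq] using G.hpq
  exact G.hpm (hp ▸ one_mem_of_one_mem_closure (hp ▸ G.hp))

theorem p_ne_zero : G.p ≠ 0 := by
  intro hp
  have hq : G.q = 1 := by simpa [hp] using G.hpq
  exact G.hqn (hq ▸ one_mem_of_one_mem_closure (hq ▸ G.hq))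

theorem S_eq : G.S = ((AddSubmonoid.closure (Set.range G.m)).map (AddMonoidHom.mulLeft G.q) ⊔
    (AddSubmonoid.closure (Set.range G.n)).map (AddMonoidHom.mulLeft G.p) : AddSubmonoid ℕ) := by
  rw [AddMonoidHom.map_mclosure, AddMonoidHom.map_mclosure, ← AddSubmonoid.closure_union]
  rfl

theorem mul_p_mem_S₁ (c : ℕ) : c * G.p ∈ G.S₁ := by
  rw [← smul_eq_mul]
  exact nsmul_mem G.hp c

theorem q_mul_mem {x : ℕ} (hx : x ∈ G.S₁) : G.q * x ∈ G.S :=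
  G.S_eq ▸ AddSubmonoid.mem_sup_left ⟨x, hx, rfl⟩

theorem p_mul_mem {x : ℕ} (hx : x ∈ G.S₂) : G.p * x ∈ G.S :=
  G.S_eq ▸ AddSubmonoid.mem_sup_right ⟨x, hx, rfl⟩

theorem exists_eq_of_mem {u : ℕ} (hu : u ∈ G.S) :
    ∃ a ∈ G.S₁, ∃ b ∈ G.S₂, u = G.q * a + G.p * b := by
  rw [S_eq, SetLike.mem_coe, AddSubmonoid.mem_sup] at hu
  obtain ⟨_, ⟨a, ha, rfl⟩, _, ⟨b, hb, rfl⟩, rfl⟩ := hu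
  exact ⟨a, ha, b, hb, rfl⟩

theorem le_ordS_mul_add_mul {z₁ z₂ : ℕ} (h₁ : z₁ ∈ G.S₁) (h₂ : z₂ ∈ G.S₂) :
    ordS G.S₁ z₁ + ordS G.S₂ z₂ ≤ ordS G.S (G.q * z₁ + G.p * z₂) :=
  le_ordS (add_mem_nM_add
    (mul_mem_nM_of_mul_mem G.q_ne_zero (fun _ => G.q_mul_mem) (mem_nM_ordS h₁))
    (mul_mem_nM_of_mul_mem G.p_ne_zero (fun _ => G.p_mul_mem) (mem_nM_ordS h₂)))

theorem exists_eq_of_mem_nM {u t : ℕ} (hu : u ∈ nM G.S t) :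
    ∃ a ∈ G.S₁, ∃ b ∈ G.S₂, u = G.q * a + G.p * b ∧ t ≤ ordS G.S₁ a + ordS G.S₂ b := by
  induction t generalizing u with
  | zero =>
    obtain ⟨a, ha, b, hb, rfl⟩ := G.exists_eq_of_mem hu
    exact ⟨a, ha, b, hb, rfl, Nat.zero_le _⟩
  | succ t ih =>
    obtain ⟨v, hv, w, hw, rfl⟩ := Set.mem_add.mp hu
    obtain ⟨a, ha, b, hb, rfl, ht⟩ := ih hw
    obtain ⟨x, hx, y, hy, rfl⟩ := G.exists_eq_of_mem hv.1
    have hxy : 1 ≤ ordS G.S₁ x + ordS G.S₂ y := by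
      by_cases hx0 : x = 0
      · have hy0 : y ≠ 0 := by rintro rfl; exact hv.2 (by simp [hx0])
        have : 1 ≤ ordS G.S₂ y := le_ordS (mem_nM_one hy hy0)
        omega
      · have : 1 ≤ ordS G.S₁ x := le_ordS (mem_nM_one hx hx0)
        omega
    refine ⟨x + a, add_mem hx ha, y + b, add_mem hy hb, by ring, ?_⟩
    have : ordS G.S₁ x + ordS G.S₁ a ≤ ordS G.S₁ (x + a) := ordS_add_ordS_le hx ha
    have : ordS G.S₂ y + ordS G.S₂ b ≤ ordS G.S₂ (y + b) := ordS_add_ordS_le hy hb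
    omega

theorem eq_and_eq_of_add_eq {s₁ s₂ z₁ z₂ : ℕ} (hs₂ : s₂ ∈ Ap G.S₂ G.q) (hz₂ : z₂ ∈ Ap G.S₂ G.q)
    (h : G.q * s₁ + G.p * s₂ = G.q * z₁ + G.p * z₂) : s₁ = z₁ ∧ s₂ = z₂ := by
  have hmod : G.p * s₂ ≡ G.p * z₂ [MOD G.q] := by
    simpa [Nat.ModEq, Nat.add_mod] using congrArg (· % G.q) h
  obtain rfl := eq_of_mem_ap_of_modEq G.hq hs₂ hz₂
    (Nat.ModEq.cancel_left_of_coprime (Nat.coprime_comm.mp G.hpq) hmod)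
  exact ⟨Nat.eq_of_mul_eq_mul_left (Nat.pos_of_ne_zero G.q_ne_zero) (by omega), rfl⟩

theorem ordS_add_ordS_le_of_specific (hG : G.Specific) {a b z₁ z₂ : ℕ} (ha : a ∈ G.S₁)
    (hb : b ∈ G.S₂) (hz₂ : z₂ ∈ Ap G.S₂ G.q) (h : G.q * a + G.p * b = G.q * z₁ + G.p * z₂) :
    ordS G.S₁ a + ordS G.S₂ b ≤ ordS G.S₁ z₁ + ordS G.S₂ z₂ := by
  obtain ⟨w, hw, c, rfl⟩ := exists_mem_ap_add_mul G.q_ne_zero hb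
  obtain ⟨rfl, rfl⟩ := G.eq_and_eq_of_add_eq hw hz₂
    (show G.q * (a + c * G.p) + G.p * w = G.q * z₁ + G.p * z₂ by rw [← h]; ring)
  have h₂ : ordS G.S₂ (w + c * G.q) ≤ ordS G.S₂ w + c * (ordS G.S₂ G.q + lS G.S₂ G.q) :=
    ordS_add_mul_le G.hnum₂.2.2 G.hq hw.1 c
  have hspec : c * (ordS G.S₂ G.q + lS G.S₂ G.q) ≤ c * ordS G.S₁ G.p :=
    Nat.mul_le_mul_left c hG
  have h₁ : c * ordS G.S₁ G.p ≤ ordS G.S₁ (c * G.p) := mul_ordS_le G.hp c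
  have h₁' : ordS G.S₁ a + ordS G.S₁ (c * G.p) ≤ ordS G.S₁ (a + c * G.p) :=
    ordS_add_ordS_le ha (G.mul_p_mem_S₁ c)
  omega

end Gluing

/-- for a specific gluing `S` of `S₁` and `S₂`, every `u ∈ S` can be
written `u = qz₁ + pz₂` with `z₁ ∈ S₁` and `z₂ ∈ AP(S₂,q)`; this representation is
unique and satisfies `ord_S(u) = ord_{S₁}(z₁) + ord_{S₂}(z₂)`. -/
theorem stmt11 (G : Gluing) (hG : G.Specific) :
    ∀ u ∈ G.S, ∃ z₁ ∈ G.S₁, ∃ z₂ ∈ Ap G.S₂ G.q,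
      u = G.q * z₁ + G.p * z₂ ∧
      ordS G.S u = ordS G.S₁ z₁ + ordS G.S₂ z₂ ∧
      ∀ s₁ ∈ G.S₁, ∀ s₂ ∈ Ap G.S₂ G.q,
        u = G.q * s₁ + G.p * s₂ → s₁ = z₁ ∧ s₂ = z₂ := by
  intro u hu
  obtain ⟨a, ha, b, hb, rfl⟩ := G.exists_eq_of_mem hu
  obtain ⟨w, hw, c, rfl⟩ := exists_mem_ap_add_mul G.q_ne_zero hb
  have hz₁ : a + c * G.p ∈ G.S₁ := add_mem ha (G.mul_p_mem_S₁ c)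
  have hu' : G.q * a + G.p * (w + c * G.q) = G.q * (a + c * G.p) + G.p * w := by ring
  refine ⟨a + c * G.p, hz₁, w, hw, hu', le_antisymm ?_ ?_,
    fun s₁ _ s₂ hs₂ h => G.eq_and_eq_of_add_eq hs₂ hw (h ▸ hu')⟩
  · obtain ⟨X, hX, Y, hY, hXY, hle⟩ := G.exists_eq_of_mem_nM (mem_nM_ordS hu)
    exact hle.trans (G.ordS_add_ordS_le_of_specific hG hX hY hw (hXY ▸ hu'))
  · exact hu' ▸ G.le_ordS_mul_add_mul hz₁ hw.1
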